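/- arXiv:2601.14839 — 2 statements merged into one kernel-verified Lean document; each statement's English description precedes it below -/
import Mathlib

section
/- Let ξ ∈ ℝ^n and x₀ = Π^n_m ξ be its cross-dimensional projection onto ℝ^m. Then the residual is orthogonal to the projection in the cross-dimensional inner product: ⟨ξ − x₀, x₀⟩_V = 0. -/
open scoped BigOperators

/-- `rep t x` is `x ⊗ 1_{t/m}`: each entry of `x ∈ ℝ^m` repeated `t/m` consecutive times. -/
noncomputable def rep (t : ℕ) {m : ℕ} (x : Fin m → ℝ) : Fin t → ℝ :=
  fun i => if h : i.1 / (t / m) < m then x ⟨i.1 / (t / m), h⟩ else 0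

/-- Cross-dimensional norm `‖x‖_V = sqrt((1/n) Σ xᵢ²)`. -/
noncomputable def vnorm {n : ℕ} (x : Fin n → ℝ) : ℝ :=
  Real.sqrt ((1 / (n : ℝ)) * ∑ i, x i ^ 2)

/-- Cross-dimensional inner product `⟨x,y⟩_V`. -/
noncomputable def vinner {m n : ℕ} (x : Fin m → ℝ) (y : Fin n → ℝ) : ℝ :=
  (1 / (Nat.lcm m n : ℝ)) * ∑ i, rep (Nat.lcm m n) x i * rep (Nat.lcm m n) y i

/-- Cross-dimensional distance `d_V(x,y) = ‖x ⊖ y‖_V`. -/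
noncomputable def dV {m n : ℕ} (x : Fin m → ℝ) (y : Fin n → ℝ) : ℝ :=
  vnorm (rep (Nat.lcm m n) x - rep (Nat.lcm m n) y)

/-- `onesRepMat m t` is `I_m ⊗ 1ᵀ_{t/m}` (an `m × t` matrix, for `m ∣ t`). -/
noncomputable def onesRepMat (m t : ℕ) : Matrix (Fin m) (Fin t) ℝ :=
  Matrix.of fun i j => if j.1 / (t / m) = i.1 then (1 : ℝ) else 0

/-- `PiMat n m` is the cross-dimensional projection matrix `Π^n_m : ℝ^n → ℝ^m`,
`Π^n_m = (m/t)(I_m ⊗ 1ᵀ_{t/m})(I_n ⊗ 1_{t/n})`, `t = lcm(m,n)`. -/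
noncomputable def PiMat (n m : ℕ) : Matrix (Fin m) (Fin n) ℝ :=
  ((m : ℝ) / (Nat.lcm m n : ℝ)) •
    (onesRepMat m (Nat.lcm m n) * (onesRepMat n (Nat.lcm m n)).transpose)

/-- `A ⊗ 1ᵀ_{t/n}` for `A ∈ M_{m×n}` (an `m × t` matrix). -/
noncomputable def repCols {m n : ℕ} (t : ℕ) (A : Matrix (Fin m) (Fin n) ℝ) :
    Matrix (Fin m) (Fin t) ℝ :=
  Matrix.of fun i j => if h : j.1 / (t / n) < n then A i ⟨j.1 / (t / n), h⟩ else 0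

/-- `B ⊗ 1_{t/p}` for `B ∈ M_{p×q}` (a `t × q` matrix). -/
noncomputable def repRows {p q : ℕ} (t : ℕ) (B : Matrix (Fin p) (Fin q) ℝ) :
    Matrix (Fin t) (Fin q) ℝ :=
  Matrix.of fun j l => if h : j.1 / (t / p) < p then B ⟨j.1 / (t / p), h⟩ l else 0

/-- Weighted dimension-keeping semi-tensor product
`A ⋉̄ B = (n/t)(A ⊗ 1ᵀ_{t/n})(B ⊗ 1_{t/p})`, `t = lcm(n,p)`. -/
noncomputable def dkstp {m n p q : ℕ} (A : Matrix (Fin m) (Fin n) ℝ)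
    (B : Matrix (Fin p) (Fin q) ℝ) : Matrix (Fin m) (Fin q) ℝ :=
  ((n : ℝ) / (Nat.lcm n p : ℝ)) • (repCols (Nat.lcm n p) A * repRows (Nat.lcm n p) B)

/-- Bridge matrix `Ψ_{n×p} = (n/t)(I_n ⊗ 1ᵀ_{t/n})(I_p ⊗ 1_{t/p})`, `t = lcm(n,p)`. -/
noncomputable def Psi (n p : ℕ) : Matrix (Fin n) (Fin p) ℝ :=
  ((n : ℝ) / (Nat.lcm n p : ℝ)) •
    (onesRepMat n (Nat.lcm n p) * (onesRepMat p (Nat.lcm n p)).transpose)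

/-!
With `t = lcm(m,n)` and `u = ξ ⊗ 1_{t/n}`, the projection `x₀ = Π^n_m ξ` is the vector of means
of the `m` consecutive blocks of `u` of length `t/m`. Hence `x₀ ⊗ 1_{t/m}` is constant on each
block while the residual `u − x₀ ⊗ 1_{t/m}` sums to zero there, so the inner product vanishes
block by block.
-/

open Matrix

lemma finProdFinEquiv_div {m d : ℕ} (k : Fin m) (r : Fin d) :
    (finProdFinEquiv (k, r) : ℕ) / d = k :=
  congrArg (fun p : Fin m × Fin d => (p.1 : ℕ)) (finProdFinEquiv.symm_apply_apply (k, r))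

lemma sum_fin_mul_eq_sum_sum {m d : ℕ} (f : Fin (m * d) → ℝ) :
    ∑ i, f i = ∑ k, ∑ r, f (finProdFinEquiv (k, r)) := by
  rw [← Equiv.sum_comp finProdFinEquiv f, Fintype.sum_prod_type]

lemma rep_self {t : ℕ} (w : Fin t → ℝ) : rep t w = w := by
  funext i
  simp [rep, Nat.div_self i.pos]

lemma rep_finProdFinEquiv {m d : ℕ} (x : Fin m → ℝ) (k : Fin m) (r : Fin d) :
    rep (m * d) x (finProdFinEquiv (k, r)) = x k := by
  simp only [rep, Nat.mul_div_cancel_left d k.pos, finProdFinEquiv_div, k.2, dif_pos]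

lemma onesRepMat_transpose_mulVec (n t : ℕ) (ξ : Fin n → ℝ) :
    (onesRepMat n t)ᵀ *ᵥ ξ = rep t ξ := by
  funext i
  simp only [mulVec, dotProduct, transpose_apply, onesRepMat, of_apply, ite_mul, one_mul,
    zero_mul, rep]
  split_ifs with h
  · rw [Fintype.sum_eq_single ⟨_, h⟩ fun j hj => if_neg fun hij => hj (Fin.ext hij.symm)]
    exact if_pos rfl
  · exact Finset.sum_eq_zero fun j _ => if_neg fun hij => h (by rw [hij]; exact j.2)

lemma onesRepMat_mul_mulVec {m d : ℕ} (u : Fin (m * d) → ℝ) (k : Fin m) :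
    (onesRepMat m (m * d) *ᵥ u) k = ∑ r, u (finProdFinEquiv (k, r)) := by
  simp only [mulVec, dotProduct, sum_fin_mul_eq_sum_sum, onesRepMat, of_apply,
    Nat.mul_div_cancel_left d k.pos, finProdFinEquiv_div, ite_mul, one_mul, zero_mul]
  rw [Fintype.sum_eq_single k fun j hj =>
    Finset.sum_eq_zero fun r _ => if_neg (Fin.val_ne_of_ne hj)]
  exact Finset.sum_congr rfl fun r _ => if_pos rfl

lemma vinner_of_dvd {m t : ℕ} (hmt : m ∣ t) (x : Fin t → ℝ) (y : Fin m → ℝ) :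
    vinner x y = (1 / t) * ∑ i, x i * rep t y i := by
  rw [vinner, Nat.lcm_eq_left hmt, rep_self]

/-- `(m/t)(I_m ⊗ 1ᵀ_{t/m}) u`: for `m ∣ t`, the means of the `m` consecutive blocks of `u`. -/
noncomputable def blockMean (m : ℕ) {t : ℕ} (u : Fin t → ℝ) : Fin m → ℝ :=
  ((m : ℝ) / t) • (onesRepMat m t *ᵥ u)

lemma PiMat_mulVec_eq_blockMean (n m : ℕ) (ξ : Fin n → ℝ) :
    PiMat n m *ᵥ ξ = blockMean m (rep (Nat.lcm m n) ξ) := by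
  rw [PiMat, smul_mulVec, ← mulVec_mulVec, onesRepMat_transpose_mulVec, blockMean]

lemma mul_blockMean_apply {m d : ℕ} (u : Fin (m * d) → ℝ) (k : Fin m) :
    d * blockMean m u k = ∑ r, u (finProdFinEquiv (k, r)) := by
  rcases Nat.eq_zero_or_pos d with rfl | hd
  · simp
  have hm : (m : ℝ) ≠ 0 := Nat.cast_ne_zero.2 k.pos.ne'
  rw [blockMean, Pi.smul_apply, onesRepMat_mul_mulVec, smul_eq_mul, ← mul_assoc, Nat.cast_mul]
  field_simp

lemma sum_sub_rep_blockMean_mul_rep_blockMean {m t : ℕ} (hmt : m ∣ t) (u : Fin t → ℝ) :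
    ∑ i, (u i - rep t (blockMean m u) i) * rep t (blockMean m u) i = 0 := by
  obtain ⟨d, rfl⟩ := hmt
  rw [sum_fin_mul_eq_sum_sum]
  refine Finset.sum_eq_zero fun k _ => ?_
  simp only [rep_finProdFinEquiv]
  rw [← Finset.sum_mul, Finset.sum_sub_distrib, ← mul_blockMean_apply, Finset.sum_const,
    Finset.card_univ, Fintype.card_fin, nsmul_eq_mul, sub_self, zero_mul]

theorem stmt8_general (n m : ℕ) (ξ : Fin n → ℝ) :
    vinner
      (rep (Nat.lcm m n) ξ - rep (Nat.lcm m n) ((PiMat n m).mulVec ξ))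
      ((PiMat n m).mulVec ξ) = 0 := by
  have hmt : m ∣ Nat.lcm m n := Nat.dvd_lcm_left m n
  rw [vinner_of_dvd hmt, PiMat_mulVec_eq_blockMean]
  exact mul_eq_zero_of_right _ (sum_sub_rep_blockMean_mul_rep_blockMean hmt _)

/-- The residual of the cross-dimensional projection is `⟨·,·⟩_V`-orthogonal to the
projection: `⟨ξ − x₀, x₀⟩_V = 0` where `x₀ = Π^n_m ξ`. -/
theorem stmt8 (n m : ℕ) (hn : 0 < n) (hm : 0 < m) (ξ : Fin n → ℝ) :
    vinner
      (rep (Nat.lcm m n) ξ - rep (Nat.lcm m n) ((PiMat n m).mulVec ξ))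
      ((PiMat n m).mulVec ξ) = 0 :=
  stmt8_general n m ξ
end

section
/- The weighted DK-STP is associative: for any real matrices A, B, C of arbitrary dimensions, (A ⋉̄ B) ⋉̄ C = A ⋉̄ (B ⋉̄ C). -/
open scoped BigOperators

lemma repCols_eq {m n : ℕ} (t : ℕ) (A : Matrix (Fin m) (Fin n) ℝ) :
    repCols t A = A * onesRepMat n t := by
  ext i j
  simp only [repCols, onesRepMat, Matrix.mul_apply, Matrix.of_apply]
  split
  · rename_i h
    rw [Finset.sum_eq_single (⟨j.1 / (t / n), h⟩ : Fin n)]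
    · simp
    · intro k _ hk
      rw [if_neg, mul_zero]
      intro hc
      exact hk (by ext; simp [hc.symm])
    · simp
  · rename_i h
    symm
    apply Finset.sum_eq_zero
    intro k _
    rw [if_neg, mul_zero]
    intro hc
    exact h (hc ▸ k.2)

lemma repRows_eq {p q : ℕ} (t : ℕ) (B : Matrix (Fin p) (Fin q) ℝ) :
    repRows t B = (onesRepMat p t).transpose * B := by
  ext j l
  simp only [repRows, onesRepMat, Matrix.mul_apply, Matrix.transpose_apply, Matrix.of_apply]
  split
  · rename_i h
    rw [Finset.sum_eq_single (⟨j.1 / (t / p), h⟩ : Fin p)]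
    · simp
    · intro k _ hk
      rw [if_neg, zero_mul]
      intro hc
      exact hk (by ext; simp [hc.symm])
    · simp
  · rename_i h
    symm
    apply Finset.sum_eq_zero
    intro k _
    rw [if_neg, zero_mul]
    intro hc
    exact h (hc ▸ k.2)

lemma dkstp_eq {m n p q : ℕ} (A : Matrix (Fin m) (Fin n) ℝ)
    (B : Matrix (Fin p) (Fin q) ℝ) : dkstp A B = A * Psi n p * B := by
  rw [dkstp, Psi, repCols_eq, repRows_eq, Matrix.mul_smul, Matrix.smul_mul]
  simp [Matrix.mul_assoc]

/-- The weighted DK-STP is associative. -/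
theorem stmt14 (m n p q r s : ℕ)
    (hm : 0 < m) (hn : 0 < n) (hp : 0 < p) (hq : 0 < q) (hr : 0 < r) (hs : 0 < s)
    (A : Matrix (Fin m) (Fin n) ℝ) (B : Matrix (Fin p) (Fin q) ℝ)
    (C : Matrix (Fin r) (Fin s) ℝ) :
    dkstp (dkstp A B) C = dkstp A (dkstp B C) := by
  simp only [dkstp_eq, Matrix.mul_assoc]
end
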